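/- Let K : X × X → R be a positive semidefinite kernel. Then exp(K), defined by exp(K)(x,y) = exp(K(x,y)), is a positive semidefinite kernel. -/

import Mathlib

def IsPSDKernel {X : Type*} (K : X → X → ℝ) : Prop :=
  (∀ x y, K x y = K y x) ∧
    ∀ (n : ℕ) (x : Fin n → X) (c : Fin n → ℝ),
      0 ≤ ∑ i, ∑ j, c i * c j * K (x i) (x j)

/-!
Expanding `exp (K x y) = ∑ₘ K x y ^ m / m!`, it suffices that every power `K ^ m` is a PSD
kernel and that PSD kernels are closed under nonnegative scaling and pointwise convergent sums.
Powers are handled by the Schur product theorem: the Gram matrix of a pointwise product of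
kernels is the Hadamard product of their Gram matrices.
-/

open Matrix

theorem isPSDKernel_iff_posSemidef_gram {X : Type*} {K : X → X → ℝ} :
    IsPSDKernel K ↔
      ∀ (n : ℕ) (x : Fin n → X), (of fun i j => K (x i) (x j)).PosSemidef := by
  have quadForm : ∀ (n : ℕ) (x : Fin n → X) (c : Fin n → ℝ),
      star c ⬝ᵥ (of fun i j => K (x i) (x j)) *ᵥ c =
        ∑ i, ∑ j, c i * c j * K (x i) (x j) := by
    intro n x c
    simp only [star_trivial, dotProduct, mulVec, of_apply, Finset.mul_sum]
    exact Finset.sum_congr rfl fun i _ => Finset.sum_congr rfl fun j _ => by ring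
  simp only [posSemidef_iff_dotProduct_mulVec, quadForm]
  constructor
  · rintro ⟨hsymm, hquad⟩ n x
    refine ⟨IsHermitian.ext fun i j => ?_, hquad n x⟩
    simp [hsymm (x i) (x j)]
  · intro h
    refine ⟨fun a b => ?_, fun n x => (h n x).2⟩
    simpa using (h 2 ![a, b]).1.apply 1 0

namespace IsPSDKernel

variable {X : Type*} {K L : X → X → ℝ}

theorem one : IsPSDKernel fun _ _ : X => (1 : ℝ) := by
  refine ⟨fun _ _ => rfl, fun n x c => ?_⟩
  simp only [mul_one, ← Finset.sum_mul_sum, ← sq]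
  positivity

theorem mul (hK : IsPSDKernel K) (hL : IsPSDKernel L) :
    IsPSDKernel fun x y => K x y * L x y :=
  isPSDKernel_iff_posSemidef_gram.2 fun n x =>
    (isPSDKernel_iff_posSemidef_gram.1 hK n x).hadamard (isPSDKernel_iff_posSemidef_gram.1 hL n x)

theorem pow (hK : IsPSDKernel K) (m : ℕ) : IsPSDKernel fun x y => K x y ^ m := by
  induction m with
  | zero => simpa only [pow_zero] using one
  | succ m ih => simpa only [pow_succ] using ih.mul hK

theorem div_const (hK : IsPSDKernel K) {a : ℝ} (ha : 0 ≤ a) :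
    IsPSDKernel fun x y => K x y / a := by
  refine ⟨fun x y => by simp only [hK.1 x y], fun n x c => ?_⟩
  have := hK.2 n x c
  simp only [mul_div_assoc', ← Finset.sum_div]
  positivity

theorem of_hasSum {ι : Type*} {F : ι → X → X → ℝ} (hF : ∀ m, IsPSDKernel (F m))
    (hL : ∀ x y, HasSum (fun m => F m x y) (L x y)) : IsPSDKernel L := by
  refine ⟨fun x y => (hL x y).unique ?_, fun n x c => ?_⟩
  · simpa only [(hF _).1 y x] using hL y x
  · exact (hasSum_sum fun i _ => hasSum_sum fun j _ => (hL (x i) (x j)).mul_left _).nonneg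
      fun m => (hF m).2 n x c

end IsPSDKernel

/-- the exponential of a PSD kernel is PSD. -/
theorem isPSDKernel_exp {X : Type*} (K : X → X → ℝ) (h : IsPSDKernel K) :
    IsPSDKernel (fun x y => Real.exp (K x y)) :=
  .of_hasSum (fun m => (h.pow m).div_const m.factorial.cast_nonneg) fun x y => by
    simpa only [Real.exp_eq_exp_ℝ] using NormedSpace.expSeries_div_hasSum_exp (K x y)
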